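/- arXiv:1509.02683 — 4 statements merged into one kernel-verified Lean document; each statement's English description precedes it below -/
import Mathlib

section
/- Fix H = (Σ, E) and let W_s and W_g be H-words of length n. There exists an H-word reconfiguration sequence from W_s to W_g if and only if there exists a sequence A_1,…,A_m of consistent subsets of {1,…,n} × Σ with A_1 = A(W_s), A_m = A(W_g), and each A_{i+1} obtained from A_i by adding or removing exactly one element. -/
/-- An H-word of length `n` (a word `W : Fin n → Alpha` whose consecutive
characters are related by `E`). -/
def IsHWord {Alpha : Type} (E : Set (Alpha × Alpha)) {n : ℕ} (W : Fin n → Alpha) : Prop :=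
  ∀ (p : ℕ) (h : p + 1 < n), (W ⟨p, Nat.lt_of_succ_lt h⟩, W ⟨p + 1, h⟩) ∈ E

/-- `A ⊆ {1,…,n} × Alpha` is consistent: every position has some character, and
characters allowed at consecutive positions are related by `E`. -/
def Consistent {Alpha : Type} (E : Set (Alpha × Alpha)) {n : ℕ}
    (A : Set (Fin n × Alpha)) : Prop :=
  (∀ p : Fin n, ∃ c : Alpha, (p, c) ∈ A) ∧
  ∀ (p : ℕ) (h : p + 1 < n) (a b : Alpha),
    ((⟨p, Nat.lt_of_succ_lt h⟩ : Fin n), a) ∈ A →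
    ((⟨p + 1, h⟩ : Fin n), b) ∈ A → (a, b) ∈ E

/-- `A(W)`, the set `{(p, W_p) : p}` associated to a word `W`. -/
def AOf {Alpha : Type} {n : ℕ} (W : Fin n → Alpha) : Set (Fin n × Alpha) :=
  {x | x.2 = W x.1}

/-- Two words differ in exactly one position. -/
def WordStep {Alpha : Type} {n : ℕ} (W W' : Fin n → Alpha) : Prop :=
  ∃ p : Fin n, W p ≠ W' p ∧ ∀ q : Fin n, q ≠ p → W q = W' q

/-- `A'` is obtained from `A` by adding or removing exactly one element. -/
def SetStep {Alpha : Type} {n : ℕ} (A A' : Set (Fin n × Alpha)) : Prop :=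
  ∃ x, (x ∉ A ∧ A' = A ∪ {x}) ∨ (x ∈ A ∧ A' = A \ {x})

/-!
A word step `W → W'` changing position `p` is simulated by the two set steps
`A(W) → A(W) ∪ A(W') → A(W')`; the middle set is consistent because the two words agree off `p`
and consecutive positions are never both `p`. Conversely, along a sequence of consistent sets
track a word encoded by the current set: adding an element keeps it encoded, and removing its
letter at `p` leaves some other letter at `p` by consistency, so the word changes in the single
position `p`. A word encoded by `A(W_g)` is `W_g`.
-/

open Relation

theorem reflTransGen_iff_exists_fin_chain {α : Type*} {r : α → α → Prop} {a b : α} :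
    ReflTransGen r a b ↔ ∃ (m : ℕ) (f : Fin (m + 1) → α), f 0 = a ∧ f (Fin.last m) = b ∧
      ∀ i : Fin m, r (f i.castSucc) (f i.succ) := by
  constructor
  · intro h
    induction h with
    | refl => exact ⟨0, fun _ => a, rfl, rfl, Fin.elim0⟩
    | @tail c d _ hcd ih =>
      obtain ⟨m, f, hf0, hfm, hf⟩ := ih
      refine ⟨m + 1, Fin.snoc f d, by simpa using hf0, Fin.snoc_last .., fun i => ?_⟩
      induction i using Fin.lastCases with
      | last => rwa [Fin.succ_last, Fin.snoc_last, Fin.snoc_castSucc, hfm]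
      | cast j => simpa only [Fin.succ_castSucc, Fin.snoc_castSucc] using hf j
  · rintro ⟨m, f, rfl, rfl, hf⟩
    exact Fin.induction .refl (fun i ih => ih.tail (hf i)) (Fin.last m)

theorem exists_fin_chain_forall_iff {α : Type*} {r : α → α → Prop} {p : α → Prop} {a b : α} :
    (∃ (m : ℕ) (f : Fin (m + 1) → α), f 0 = a ∧ f (Fin.last m) = b ∧ (∀ i, p (f i)) ∧
        ∀ i : Fin m, r (f i.castSucc) (f i.succ)) ↔
      p a ∧ ReflTransGen (fun x y => p x ∧ r x y ∧ p y) a b := by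
  rw [reflTransGen_iff_exists_fin_chain]
  constructor
  · rintro ⟨m, f, rfl, hfm, hp, hf⟩
    exact ⟨hp 0, m, f, rfl, hfm, fun i => ⟨hp _, hf i, hp _⟩⟩
  · rintro ⟨ha, m, f, rfl, hfm, hf⟩
    refine ⟨m, f, rfl, hfm, fun i => ?_, fun i => (hf i).2.1⟩
    induction i using Fin.cases with
    | zero => exact ha
    | succ j => exact (hf j).2.2

section

variable {Alpha : Type} {E : Set (Alpha × Alpha)} {n : ℕ}

variable (E) in
def HWordAdj (W W' : Fin n → Alpha) : Prop :=
  IsHWord E W ∧ WordStep W W' ∧ IsHWord E W'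

variable (E) in
def ConsistentAdj (A A' : Set (Fin n × Alpha)) : Prop :=
  Consistent E A ∧ SetStep A A' ∧ Consistent E A'

@[simp]
theorem mem_aOf {W : Fin n → Alpha} {q : Fin n} {c : Alpha} : (q, c) ∈ AOf W ↔ c = W q :=
  Iff.rfl

theorem Consistent.isHWord {A : Set (Fin n × Alpha)} {W : Fin n → Alpha} (hA : Consistent E A)
    (hW : ∀ q, (q, W q) ∈ A) : IsHWord E W :=
  fun p h => hA.2 p h _ _ (hW _) (hW _)

theorem consistent_aOf_iff {W : Fin n → Alpha} : Consistent E (AOf W) ↔ IsHWord E W := by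
  refine ⟨fun h => h.isHWord fun _ => rfl, fun hW => ⟨fun p => ⟨W p, rfl⟩, ?_⟩⟩
  intro p h a b ha hb
  rw [mem_aOf] at ha hb
  rw [ha, hb]
  exact hW p h

theorem WordStep.consistent_aOf_union {W W' : Fin n → Alpha} (hW : IsHWord E W)
    (hW' : IsHWord E W') (h : WordStep W W') : Consistent E (AOf W ∪ AOf W') := by
  obtain ⟨p, -, heq⟩ := h
  refine ⟨fun q => ⟨W q, Or.inl rfl⟩, ?_⟩
  rintro q hq a b ha hb
  have hagree : W ⟨q, Nat.lt_of_succ_lt hq⟩ = W' ⟨q, Nat.lt_of_succ_lt hq⟩ ∨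
      W ⟨q + 1, hq⟩ = W' ⟨q + 1, hq⟩ := by
    by_cases hqp : (⟨q, Nat.lt_of_succ_lt hq⟩ : Fin n) = p
    · exact .inr (heq _ (by rw [← hqp]; simp))
    · exact .inl (heq _ hqp)
  simp only [Set.mem_union, mem_aOf] at ha hb
  have hWq := hW q hq
  have hW'q := hW' q hq
  rcases ha with rfl | rfl <;> rcases hb with rfl | rfl <;> rcases hagree with h | h <;> simp_all

theorem WordStep.reflTransGen_aOf {W W' : Fin n → Alpha} (hW : IsHWord E W)
    (hW' : IsHWord E W') (h : WordStep W W') :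
    ReflTransGen (ConsistentAdj E) (AOf W) (AOf W') := by
  have hU := h.consistent_aOf_union hW hW'
  obtain ⟨p, hp, heq⟩ := h
  have hadd : AOf W ∪ AOf W' = AOf W ∪ {(p, W' p)} := by
    ext ⟨q, c⟩
    by_cases hq : q = p
    · subst hq; simp [or_comm]
    · simp [hq, heq q hq]
  have hremove : AOf W' = (AOf W ∪ AOf W') \ {(p, W p)} := by
    ext ⟨q, c⟩
    by_cases hq : q = p
    · subst hq; grind [mem_aOf]
    · simp [hq, heq q hq]
  refine .head ⟨consistent_aOf_iff.2 hW, ⟨(p, W' p), Or.inl ⟨?_, hadd⟩⟩, hU⟩ (.single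
    ⟨hU, ⟨(p, W p), Or.inr ⟨Or.inl rfl, hremove⟩⟩, consistent_aOf_iff.2 hW'⟩)
  exact fun h : W' p = W p => hp h.symm

theorem SetStep.exists_reflGen_wordStep {A A' : Set (Fin n × Alpha)} {W : Fin n → Alpha}
    (h : SetStep A A') (hA' : Consistent E A') (hW : ∀ q, (q, W q) ∈ A) :
    ∃ W', (∀ q, (q, W' q) ∈ A') ∧ ReflGen WordStep W W' := by
  obtain ⟨x, (⟨-, rfl⟩ | ⟨-, rfl⟩)⟩ := h
  · exact ⟨W, fun q => Or.inl (hW q), .refl⟩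
  by_cases hx : x = (x.1, W x.1)
  · obtain ⟨c, hc, hcx⟩ := hA'.1 x.1
    have hcW : c ≠ W x.1 := fun hcW => hcx (by rw [hcW, ← hx]; rfl)
    refine ⟨Function.update W x.1 c, fun q => ?_, .single ⟨x.1, by simpa using hcW.symm,
      fun q hq => (Function.update_of_ne hq _ _).symm⟩⟩
    by_cases hq : q = x.1
    · subst hq; simpa using ⟨hc, hcx⟩
    · rw [Function.update_of_ne hq]
      exact ⟨hW q, fun hqx => hq (congrArg Prod.fst hqx)⟩
  · exact ⟨W, fun q => ⟨hW q, fun hqx => hx (by rw [← Set.mem_singleton_iff.1 hqx])⟩, .refl⟩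

theorem exists_reflTransGen_hWordAdj_of_reflTransGen_aOf {Ws : Fin n → Alpha}
    {B : Set (Fin n × Alpha)} (h : ReflTransGen (ConsistentAdj E) (AOf Ws) B) :
    ∃ W, (∀ q, (q, W q) ∈ B) ∧ ReflTransGen (HWordAdj E) Ws W := by
  induction h with
  | refl => exact ⟨Ws, fun _ => rfl, .refl⟩
  | tail _ hstep ih =>
    obtain ⟨W, hW, hWsW⟩ := ih
    obtain ⟨hA, hAA', hA'⟩ := hstep
    obtain ⟨W', hW', rfl | hWW'⟩ := hAA'.exists_reflGen_wordStep hA' hW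
    · exact ⟨W, hW', hWsW⟩
    · exact ⟨W', hW', hWsW.tail ⟨hA.isHWord hW, hWW', hA'.isHWord hW'⟩⟩

theorem reflTransGen_hWordAdj_iff {Ws Wg : Fin n → Alpha} :
    ReflTransGen (HWordAdj E) Ws Wg ↔ ReflTransGen (ConsistentAdj E) (AOf Ws) (AOf Wg) := by
  refine ⟨fun h => ?_, fun h => ?_⟩
  · induction h with
    | refl => exact .refl
    | tail _ hstep ih => exact ih.trans (hstep.2.1.reflTransGen_aOf hstep.1 hstep.2.2)
  · obtain ⟨W, hW, hWsW⟩ := exists_reflTransGen_hWordAdj_of_reflTransGen_aOf h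
    rwa [show W = Wg from funext hW] at hWsW

end

theorem stmt6_general {Alpha : Type} (E : Set (Alpha × Alpha)) (n : ℕ)
    (Ws Wg : Fin n → Alpha) :
    (∃ (m : ℕ) (Seq : Fin (m + 1) → Fin n → Alpha),
        Seq 0 = Ws ∧ Seq (Fin.last m) = Wg ∧ (∀ i, IsHWord E (Seq i)) ∧
        ∀ i : Fin m, WordStep (Seq i.castSucc) (Seq i.succ)) ↔
    (∃ (m : ℕ) (A : Fin (m + 1) → Set (Fin n × Alpha)),
        A 0 = AOf Ws ∧ A (Fin.last m) = AOf Wg ∧ (∀ i, Consistent E (A i)) ∧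
        ∀ i : Fin m, SetStep (A i.castSucc) (A i.succ)) := by
  rw [exists_fin_chain_forall_iff, exists_fin_chain_forall_iff]
  exact and_congr consistent_aOf_iff.symm reflTransGen_hWordAdj_iff

theorem stmt6 {Alpha : Type} [Fintype Alpha] (E : Set (Alpha × Alpha)) (n : ℕ)
    (Ws Wg : Fin n → Alpha) (hWs : IsHWord E Ws) (hWg : IsHWord E Wg) :
    (∃ (m : ℕ) (Seq : Fin (m + 1) → Fin n → Alpha),
        Seq 0 = Ws ∧ Seq (Fin.last m) = Wg ∧ (∀ i, IsHWord E (Seq i)) ∧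
        ∀ i : Fin m, WordStep (Seq i.castSucc) (Seq i.succ)) ↔
    (∃ (m : ℕ) (A : Fin (m + 1) → Set (Fin n × Alpha)),
        A 0 = AOf Ws ∧ A (Fin.last m) = AOf Wg ∧ (∀ i, Consistent E (A i)) ∧
        ∀ i : Fin m, SetStep (A i.castSucc) (A i.succ)) :=
  stmt6_general E n Ws Wg
end

section
/- Let G be a simple graph on vertices {1,…,n} with maximum degree at most Δ and let k ≥ 1. If G contains a clique on k vertices, then in the clique constraint graph R(G,k) there exists a reconfiguration sequence starting at the initial configuration C_1 of length k + 3k(k−1)/2 + 1 in which each edge is reversed at most once and whose last step reverses the target edge t = {V,W}. -/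
/-!
STATEMENT 8: Let G be a simple graph on vertices {1,…,n} with maximum degree
at most Δ and let k ≥ 1. If G contains a clique on k vertices, then in the
clique constraint graph R(G,k) there exists a reconfiguration sequence
starting at the initial configuration C_1 of length k + 3k(k−1)/2 + 1 in which
each edge is reversed at most once and whose last step reverses the target
edge t = {V,W}.

Vertices of R(G,k) are encoded as `Fin n ⊕ ({e // e ∈ G.edgeFinset} ⊕ Fin 3)`:
`Sum.inl i` is `a_i`, `Sum.inr (Sum.inl e)` is `b_e`, and
`Sum.inr (Sum.inr 0)`, `Sum.inr (Sum.inr 1)`, `Sum.inr (Sum.inr 2)` are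
`U`, `V`, `W` respectively.
-/

/-- A configuration of a constraint graph assigns to each edge one of its
two endpoints (its head). -/
def IsConf {V : Type} (G : SimpleGraph V) (C : Sym2 V → V) : Prop :=
  ∀ e ∈ G.edgeSet, C e ∈ e

/-- A configuration is legal if every vertex receives inflow (total weight of
edges whose head is that vertex) at least its minimum inflow. -/
def Legal {V : Type} [Fintype V] [DecidableEq V] (G : SimpleGraph V)
    [DecidableRel G.Adj] (w : Sym2 V → ℕ) (μ : V → ℕ) (C : Sym2 V → V) : Prop :=
  ∀ v : V, μ v ≤ ∑ e ∈ G.edgeFinset, if C e = v then w e else 0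

/-- Two configurations agree (as orientations of the edges of `G`). -/
def ConfEq {V : Type} (G : SimpleGraph V) (C C' : Sym2 V → V) : Prop :=
  ∀ e ∈ G.edgeSet, C e = C' e

/-- One reconfiguration step: exactly one edge changes its orientation. -/
def Step {V : Type} (G : SimpleGraph V) (C C' : Sym2 V → V) : Prop :=
  ∃ e ∈ G.edgeSet, C e ≠ C' e ∧ ∀ f ∈ G.edgeSet, f ≠ e → C f = C' f

/-- A reconfiguration sequence: every configuration is a legal configuration
and each consecutive pair differs in the orientation of exactly one edge. -/
def IsReconfSeq {V : Type} [Fintype V] [DecidableEq V] (G : SimpleGraph V)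
    [DecidableRel G.Adj] (w : Sym2 V → ℕ) (μ : V → ℕ) {m : ℕ}
    (Cs : Fin (m + 1) → Sym2 V → V) : Prop :=
  (∀ i, IsConf G (Cs i) ∧ Legal G w μ (Cs i)) ∧
    ∀ i : Fin m, Step G (Cs i.castSucc) (Cs i.succ)

/-- In the sequence, each edge is reversed at most once. -/
def AtMostOnce {V : Type} (G : SimpleGraph V) {m : ℕ}
    (Cs : Fin (m + 1) → Sym2 V → V) : Prop :=
  ∀ e ∈ G.edgeSet, ∀ i j : Fin m,
    Cs i.castSucc e ≠ Cs i.succ e → Cs j.castSucc e ≠ Cs j.succ e → i = j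

variable {n : ℕ}

/-- Vertices of the clique constraint graph `R(G,k)`. -/
abbrev RV (G : SimpleGraph (Fin n)) [DecidableRel G.Adj] : Type :=
  Fin n ⊕ ({e : Sym2 (Fin n) // e ∈ G.edgeFinset} ⊕ Fin 3)

/-- Adjacency of `R(G,k)`: `a_i ~ b_e` iff `i ∈ e`; `U ~ a_i` for all `i`;
`b_e ~ V` for all `e`; and `V ~ W`. -/
def radjB (G : SimpleGraph (Fin n)) [DecidableRel G.Adj] :
    RV G → RV G → Bool
  | .inl i, .inr (.inl e) => decide (i ∈ (e : Sym2 (Fin n)))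
  | .inr (.inl e), .inl i => decide (i ∈ (e : Sym2 (Fin n)))
  | .inl _, .inr (.inr u) => decide ((u : ℕ) = 0)
  | .inr (.inr u), .inl _ => decide ((u : ℕ) = 0)
  | .inr (.inl _), .inr (.inr u) => decide ((u : ℕ) = 1)
  | .inr (.inr u), .inr (.inl _) => decide ((u : ℕ) = 1)
  | .inr (.inr u), .inr (.inr v) =>
      decide (((u : ℕ) = 1 ∧ (v : ℕ) = 2) ∨ ((u : ℕ) = 2 ∧ (v : ℕ) = 1))
  | _, _ => false

/-- The underlying graph of the clique constraint graph `R(G,k)`. -/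
def RGraph (G : SimpleGraph (Fin n)) [DecidableRel G.Adj] : SimpleGraph (RV G) where
  Adj a b := radjB G a b
  symm := by
    constructor
    rintro (i | e | u) (j | f | v) h <;> simp_all [radjB] <;> omega
  loopless := by
    constructor
    rintro (i | e | u) h <;> simp_all [radjB] <;> omega

instance (G : SimpleGraph (Fin n)) [DecidableRel G.Adj] :
    DecidableRel (RGraph G).Adj :=
  fun a b => inferInstanceAs (Decidable (radjB G a b = true))

/-- Edge weights of `R(G,k)`, as a symmetric pair function: `{a_i, b_e}` has
weight 1, `{U, a_i}` has weight `Δ`, `{b_e, V}` has weight 2, and the target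
edge `{V, W}` has weight `k(k-1)`. -/
def wPairR (G : SimpleGraph (Fin n)) [DecidableRel G.Adj] (Δ k : ℕ) :
    RV G → RV G → ℕ
  | .inl _, .inr (.inl _) => 1
  | .inr (.inl _), .inl _ => 1
  | .inl _, .inr (.inr u) => if (u : ℕ) = 0 then Δ else 0
  | .inr (.inr u), .inl _ => if (u : ℕ) = 0 then Δ else 0
  | .inr (.inl _), .inr (.inr u) => if (u : ℕ) = 1 then 2 else 0
  | .inr (.inr u), .inr (.inl _) => if (u : ℕ) = 1 then 2 else 0
  | .inr (.inr u), .inr (.inr v) =>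
      if ((u : ℕ) = 1 ∧ (v : ℕ) = 2) ∨ ((u : ℕ) = 2 ∧ (v : ℕ) = 1)
      then k * (k - 1) else 0
  | _, _ => 0

/-- Edge weights of `R(G,k)`. -/
def wR (G : SimpleGraph (Fin n)) [DecidableRel G.Adj] (Δ k : ℕ) :
    Sym2 (RV G) → ℕ :=
  Sym2.lift ⟨wPairR G Δ k, by
    rintro (i | e | u) (j | f | v) <;> (try rfl) <;>
      simp only [wPairR] <;> (exact if_congr (by tauto) rfl rfl)⟩

/-- Minimum inflows of `R(G,k)`: `μ(a_i) = deg_G(i)`, `μ(b_e) = 2`,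
`μ(U) = (n-k)·Δ`, `μ(V) = k(k-1)`, `μ(W) = 0`. -/
def μR (G : SimpleGraph (Fin n)) [DecidableRel G.Adj] (Δ k : ℕ) : RV G → ℕ
  | .inl i => G.degree i
  | .inr (.inl _) => 2
  | .inr (.inr u) =>
      if (u : ℕ) = 0 then (n - k) * Δ else if (u : ℕ) = 1 then k * (k - 1) else 0

/-- The head function of the initial configuration `C₁`: each `{a_i, b_e}` is
oriented toward `a_i`, each `{U, a_i}` toward `U`, each `{b_e, V}` toward
`b_e`, and `t = {V,W}` toward `V`. -/
def headR (G : SimpleGraph (Fin n)) [DecidableRel G.Adj] : RV G → RV G → RV G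
  | .inl i, .inr (.inl _) => .inl i
  | .inr (.inl _), .inl i => .inl i
  | .inl _, .inr (.inr u) => .inr (.inr u)
  | .inr (.inr u), .inl _ => .inr (.inr u)
  | .inr (.inl e), .inr (.inr _) => .inr (.inl e)
  | .inr (.inr _), .inr (.inl e) => .inr (.inl e)
  | .inr (.inr _), .inr (.inr _) => .inr (.inr 1)
  | _, _ => .inr (.inr 0)

/-- The initial configuration `C₁` of `R(G,k)`. -/
def CR (G : SimpleGraph (Fin n)) [DecidableRel G.Adj] : Sym2 (RV G) → RV G :=
  Sym2.lift ⟨headR G, by rintro (i | e | u) (j | f | v) <;> rfl⟩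

/-- The target edge `t = {V, W}`. -/
def tEdge (G : SimpleGraph (Fin n)) [DecidableRel G.Adj] : Sym2 (RV G) :=
  s((.inr (.inr 1) : RV G), (.inr (.inr 2) : RV G))

/-!
The sequence reverses, each exactly once and in this order: the edges `{U, a_i}` for the
vertices `i` of a `k`-clique `S`; both edges `{a_i, b_e}` of every edge `e` of `G` inside `S`;
the edges `{b_e, V}` for these `k(k-1)/2` edges `e`; and finally `t`. Every intermediate
configuration is legal because no vertex loses inflow before it has gained enough elsewhere:
`a_i` gives away its edges to the `b_e` only after receiving `{U, a_i}`, of weight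
`Δ ≥ deg i`; `b_e` gives away `{b_e, V}` only after receiving both of its `a`-edges; `U` only
ever loses the `k` edges of weight `Δ` coming from the clique; and `V` gives away `t`, of
weight `k(k-1)`, only after receiving the `k(k-1)/2` edges `{b_e, V}` of weight `2`.

Since the reversed edges are pairwise distinct, the `i`-th configuration is `C_1` with the
first `i` edges of this list reversed.
-/

theorem List.mem_take_of_mem_prefix {α : Type*} {A L : List α} {x y : α} {i : ℕ}
    (hA : A <+: L) (hx : x ∈ A) (hy : y ∈ L.take i) (hyA : y ∉ A) : x ∈ L.take i := by
  obtain ⟨B, rfl⟩ := hA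
  rw [List.take_append, List.mem_append] at hy ⊢
  have hi : A.length ≤ i := by
    by_contra! hi
    rcases hy with hy | hy
    · exact hyA (List.mem_of_mem_take hy)
    · simp [Nat.sub_eq_zero_of_le hi.le] at hy
  exact Or.inl (by rwa [List.take_of_length_le hi])

theorem List.mem_take_add_one_iff {α : Type*} {L : List α} {i : ℕ} (hi : i < L.length)
    {x : α} :
    x ∈ L.take (i + 1) ↔ x ∈ L.take i ∨ x = L[i] := by
  rw [List.take_add_one, List.getElem?_eq_getElem hi, List.mem_append]
  simp

theorem List.Nodup.getElem_not_mem_take {α : Type*} {L : List α} (hL : L.Nodup) {i : ℕ}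
    (hi : i < L.length) : L[i] ∉ L.take i := by
  rw [List.mem_take_iff_getElem]
  rintro ⟨j, hj, h⟩
  have := hL.getElem_inj_iff.1 h
  omega

section LinearOrder

variable {α : Type*} [LinearOrder α]

theorem Sym2.inf_mem (e : Sym2 α) : e.inf ∈ e := by
  induction e using Sym2.ind with
  | _ a b => rcases le_total a b with h | h <;> simp [h]

theorem Sym2.sup_mem (e : Sym2 α) : e.sup ∈ e := by
  induction e using Sym2.ind with
  | _ a b => rcases le_total a b with h | h <;> simp [h]

theorem Sym2.inf_ne_sup {e : Sym2 α} (he : ¬e.IsDiag) : e.inf ≠ e.sup := by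
  induction e using Sym2.ind with
  | _ a b =>
    simp only [Sym2.mk_isDiag_iff] at he
    rcases lt_or_gt_of_ne he with h | h <;> simp [h.le, h.ne]

end LinearOrder

section Reorientation

variable {V : Type} [DecidableEq V]

noncomputable def reversedHead (C : Sym2 V → V) (e : Sym2 V) : V :=
  if h : C e ∈ e then Sym2.Mem.other h else C e

noncomputable def reverseOn (P : List (Sym2 V)) (C : Sym2 V → V) (e : Sym2 V) : V :=
  if e ∈ P then reversedHead C e else C e

variable {C : Sym2 V → V} {P : List (Sym2 V)}

theorem reversedHead_mk_of_eq_left {x y : V} (h : C s(x, y) = x) : reversedHead C s(x, y) = y := by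
  have hx : C s(x, y) ∈ s(x, y) := by rw [h]; exact Sym2.mem_mk_left x y
  rw [reversedHead, dif_pos hx, ← Sym2.congr_right (a := C s(x, y)), Sym2.other_spec, h]

theorem reverseOn_mk_of_mem_of_eq_left {x y : V} (hP : s(x, y) ∈ P) (h : C s(x, y) = x) :
    reverseOn P C s(x, y) = y := by
  rw [reverseOn, if_pos hP, reversedHead_mk_of_eq_left h]

theorem reverseOn_mk_of_mem_of_eq_right {x y : V} (hP : s(x, y) ∈ P) (h : C s(x, y) = y) :
    reverseOn P C s(x, y) = x := by
  rw [Sym2.eq_swap] at hP h ⊢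
  exact reverseOn_mk_of_mem_of_eq_left hP h

theorem reverseOn_of_not_mem {e : Sym2 V} (hP : e ∉ P) : reverseOn P C e = C e :=
  if_neg hP

@[simp] theorem reverseOn_nil : reverseOn [] C = C := rfl

theorem isConf_reverseOn {G : SimpleGraph V} (hC : IsConf G C) : IsConf G (reverseOn P C) := by
  intro e he
  unfold reverseOn reversedHead
  split_ifs with _ h
  · exact Sym2.other_mem h
  · exact hC e he
  · exact hC e he

theorem reversedHead_ne {G : SimpleGraph V} (hC : IsConf G C) {e : Sym2 V} (he : e ∈ G.edgeSet) :
    reversedHead C e ≠ C e := by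
  rw [reversedHead, dif_pos (hC e he)]
  exact Sym2.other_ne (G.not_isDiag_of_mem_edgeSet he) _

end Reorientation

section ReconfSeq

variable {V : Type} [DecidableEq V] {C : Sym2 V → V} {L : List (Sym2 V)} {i : ℕ}

theorem reverseOn_take_add_one_of_ne (hi : i < L.length) {e : Sym2 V} (he : e ≠ L[i]) :
    reverseOn (L.take (i + 1)) C e = reverseOn (L.take i) C e := by
  simp only [reverseOn, List.mem_take_add_one_iff hi, he, or_false]

theorem reverseOn_take_add_one_getElem (hL : L.Nodup) (hi : i < L.length) :
    reverseOn (L.take (i + 1)) C L[i] = reversedHead C L[i] ∧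
      reverseOn (L.take i) C L[i] = C L[i] :=
  ⟨if_pos ((List.mem_take_add_one_iff hi).2 (Or.inr rfl)),
    reverseOn_of_not_mem (hL.getElem_not_mem_take hi)⟩

theorem reverseOn_take_add_one_ne {G : SimpleGraph V} (hC : IsConf G C) (hL : L.Nodup)
    (hi : i < L.length) (hLG : L[i] ∈ G.edgeSet) :
    reverseOn (L.take i) C L[i] ≠ reverseOn (L.take (i + 1)) C L[i] := by
  rw [(reverseOn_take_add_one_getElem hL hi).1, (reverseOn_take_add_one_getElem hL hi).2]
  exact (reversedHead_ne hC hLG).symm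

theorem reverseOn_take_length_ne {G : SimpleGraph V} (hC : IsConf G C) {e : Sym2 V}
    (hL : (L ++ [e]).Nodup) (he : e ∈ G.edgeSet) :
    reverseOn ((L ++ [e]).take L.length) C e ≠
      reverseOn ((L ++ [e]).take (L.length + 1)) C e := by
  have hi : L.length < (L ++ [e]).length := by simp
  simpa using reverseOn_take_add_one_ne hC hL hi (by simpa using he)

theorem isReconfSeq_reverseOn_take [Fintype V] {G : SimpleGraph V} [DecidableRel G.Adj]
    {w : Sym2 V → ℕ} {μ : V → ℕ} {m : ℕ} (hm : L.length = m) (hC : IsConf G C)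
    (hL : L.Nodup) (hLG : ∀ e ∈ L, e ∈ G.edgeSet)
    (hlegal : ∀ i, Legal G w μ (reverseOn (L.take i) C)) :
    IsReconfSeq G w μ (fun i : Fin (m + 1) => reverseOn (L.take i) C) := by
  refine ⟨fun i => ⟨isConf_reverseOn hC, hlegal i⟩, fun i => ?_⟩
  have hi : (i : ℕ) < L.length := hm ▸ i.isLt
  have hLi : L[i] ∈ G.edgeSet := hLG _ (List.getElem_mem hi)
  exact ⟨L[i], hLi, reverseOn_take_add_one_ne hC hL hi hLi,
    fun f _ hf => (reverseOn_take_add_one_of_ne hi hf).symm⟩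

theorem atMostOnce_reverseOn_take {G : SimpleGraph V} {m : ℕ} (hm : L.length = m) (hL : L.Nodup) :
    AtMostOnce G (fun i : Fin (m + 1) => reverseOn (L.take i) C) := by
  have reversed_eq : ∀ (i : Fin m) (e : Sym2 V),
      reverseOn (L.take i) C e ≠ reverseOn (L.take (i + 1)) C e → e = L[i]'(hm ▸ i.isLt) :=
    fun i e h => by_contra fun he => h (reverseOn_take_add_one_of_ne _ he).symm
  intro e _ i j hi hj
  exact Fin.ext (hL.getElem_inj_iff.1 ((reversed_eq i e hi).symm.trans (reversed_eq j e hj)))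

end ReconfSeq

section Inflow

variable {V : Type} [Fintype V] [DecidableEq V] (G : SimpleGraph V) [DecidableRel G.Adj]
  (w : Sym2 V → ℕ) (C : Sym2 V → V)

def inflow (v : V) : ℕ := ∑ e ∈ G.edgeFinset, if C e = v then w e else 0

variable {G w C} {v : V}

theorem le_inflow_of_head {e : Sym2 V} (he : e ∈ G.edgeSet) (hC : C e = v) :
    w e ≤ inflow G w C v := by
  have := Finset.single_le_sum (f := fun e => if C e = v then w e else 0)
    (fun _ _ => Nat.zero_le _) (G.mem_edgeFinset.2 he)
  rwa [if_pos hC] at this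

theorem sum_le_inflow {ι : Type*} {s : Finset ι} {g : ι → Sym2 V} (hg : Set.InjOn g s)
    (hG : ∀ x ∈ s, g x ∈ G.edgeSet) (hC : ∀ x ∈ s, C (g x) = v) :
    ∑ x ∈ s, w (g x) ≤ inflow G w C v := by
  classical
  rw [← Finset.sum_image hg]
  calc ∑ e ∈ s.image g, w e = ∑ e ∈ s.image g, if C e = v then w e else 0 := by
        refine Finset.sum_congr rfl fun e he => ?_
        obtain ⟨x, hx, rfl⟩ := Finset.mem_image.1 he
        rw [if_pos (hC x hx)]
    _ ≤ inflow G w C v := by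
        refine Finset.sum_le_sum_of_subset_of_nonneg (fun e he => ?_) fun _ _ _ => Nat.zero_le _
        obtain ⟨x, hx, rfl⟩ := Finset.mem_image.1 he
        exact G.mem_edgeFinset.2 (hG x hx)

end Inflow

namespace RGraph

variable {n : ℕ} {G : SimpleGraph (Fin n)} [DecidableRel G.Adj]

theorem aU_mem_edgeSet (i : Fin n) : s(.inl i, .inr (.inr 0)) ∈ (RGraph G).edgeSet :=
  (RGraph G).mem_edgeSet.2 rfl

theorem ab_mem_edgeSet {i : Fin n} {f : {e // e ∈ G.edgeFinset}} (h : i ∈ f.1) :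
    s(.inl i, .inr (.inl f)) ∈ (RGraph G).edgeSet :=
  (RGraph G).mem_edgeSet.2 (decide_eq_true h)

theorem bV_mem_edgeSet (f : {e // e ∈ G.edgeFinset}) :
    s(.inr (.inl f), .inr (.inr 1)) ∈ (RGraph G).edgeSet :=
  (RGraph G).mem_edgeSet.2 rfl

theorem tEdge_mem_edgeSet : tEdge G ∈ (RGraph G).edgeSet :=
  (RGraph G).mem_edgeSet.2 rfl

theorem isConf_CR : IsConf (RGraph G) (CR G) := by
  intro e he
  induction e using Sym2.ind with
  | _ x y =>
    rw [SimpleGraph.mem_edgeSet] at he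
    rcases x with i | f | u <;> rcases y with i' | f' | u' <;>
      simp_all [RGraph, radjB, CR, headR]
    fin_cases u <;> fin_cases u' <;> simp_all

end RGraph

noncomputable section CliqueMoves

open Finset

variable {n : ℕ} (G : SimpleGraph (Fin n)) [DecidableRel G.Adj] (S : Finset (Fin n))

def cliqueEdges : Finset {e // e ∈ G.edgeFinset} :=
  (S.offDiag.image (Function.uncurry Sym2.mk)).subtype (· ∈ G.edgeFinset)

def uMoves : List (Sym2 (RV G)) :=
  S.toList.map fun i => s(.inl i, .inr (.inr 0))

def abMoves : List (Sym2 (RV G)) :=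
  (cliqueEdges G S).toList.flatMap fun e =>
    [s(.inl e.1.inf, .inr (.inl e)), s(.inl e.1.sup, .inr (.inl e))]

def bvMoves : List (Sym2 (RV G)) :=
  (cliqueEdges G S).toList.map fun e => s(.inr (.inl e), .inr (.inr 1))

def cliqueMoves : List (Sym2 (RV G)) :=
  uMoves G S ++ abMoves G S ++ bvMoves G S ++ [tEdge G]

variable {G S}

theorem mem_of_mem_cliqueEdges {e : {e // e ∈ G.edgeFinset}} (he : e ∈ cliqueEdges G S)
    {i : Fin n} (hi : i ∈ e.1) : i ∈ S := by
  obtain ⟨⟨a, b⟩, hab, he⟩ := Finset.mem_image.1 (Finset.mem_subtype.1 he)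
  rw [Finset.mem_offDiag] at hab
  rw [← he] at hi
  rcases Sym2.mem_iff.1 hi with rfl | rfl
  exacts [hab.1, hab.2.1]

theorem two_mul_card_cliqueEdges (hS : G.IsClique S) :
    2 * #(cliqueEdges G S) = #S * (#S - 1) := by
  rw [cliqueEdges, Finset.card_subtype, Finset.filter_true_of_mem,
    Sym2.two_mul_card_image_offDiag, Finset.offDiag_card, Nat.mul_sub_one]
  intro e he
  obtain ⟨⟨a, b⟩, hab, rfl⟩ := Finset.mem_image.1 he
  rw [Finset.mem_offDiag] at hab
  exact G.mem_edgeFinset.2 (hS hab.1 hab.2.1 hab.2.2)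

theorem length_cliqueMoves {k : ℕ} (hS : G.IsNClique k S) :
    (cliqueMoves G S).length = k + 3 * (k * (k - 1)) / 2 + 1 := by
  have hcard := two_mul_card_cliqueEdges hS.isClique
  rw [hS.card_eq] at hcard
  simp [cliqueMoves, uMoves, abMoves, bvMoves, hS.card_eq]
  omega

theorem nodup_cliqueMoves : (cliqueMoves G S).Nodup := by
  have hU : (uMoves G S).Nodup := S.nodup_toList.map fun i j h => by simpa using h
  have hAB : (abMoves G S).Nodup := by
    refine List.nodup_flatMap.2
      ⟨fun e _ => ?_, (cliqueEdges G S).nodup_toList.imp fun hne => ?_⟩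
    · simpa using Sym2.inf_ne_sup (G.not_isDiag_of_mem_edgeSet (G.mem_edgeFinset.1 e.2))
    · simp [Function.onFun, hne.symm]
  have hBV : (bvMoves G S).Nodup := (cliqueEdges G S).nodup_toList.map fun e f h => by simpa using h
  simp only [cliqueMoves, List.nodup_append, List.nodup_singleton]
  refine ⟨⟨⟨hU, hAB, ?_⟩, hBV, ?_⟩, trivial, ?_⟩
  · simp only [uMoves, abMoves, List.mem_map, List.mem_flatMap, List.mem_cons, List.not_mem_nil]
    rintro _ ⟨i, -, rfl⟩ _ ⟨e, -, he⟩
    aesop (add simp Sym2.eq_iff)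
  · simp only [uMoves, abMoves, bvMoves, List.mem_append, List.mem_map, List.mem_flatMap,
      List.mem_cons, List.not_mem_nil]
    rintro _ (⟨i, -, rfl⟩ | ⟨e, -, he⟩) _ ⟨f, -, rfl⟩
    all_goals aesop (add simp Sym2.eq_iff)
  · simp only [uMoves, abMoves, bvMoves, List.mem_append, List.mem_map, List.mem_flatMap,
      List.mem_singleton]
    rintro _ ((⟨i, -, rfl⟩ | ⟨e, -, he⟩) | ⟨f, -, rfl⟩) _ rfl
    all_goals aesop (add simp [Sym2.eq_iff, tEdge])

theorem mem_edgeSet_of_mem_cliqueMoves {e : Sym2 (RV G)} (he : e ∈ cliqueMoves G S) :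
    e ∈ (RGraph G).edgeSet := by
  simp only [cliqueMoves, uMoves, abMoves, bvMoves, List.mem_append, List.mem_map,
    List.mem_flatMap, List.mem_cons, List.not_mem_nil, or_false] at he
  rcases he with ((⟨i, -, rfl⟩ | ⟨f, -, rfl | rfl⟩) | ⟨f, -, rfl⟩) | rfl
  exacts [RGraph.aU_mem_edgeSet i, RGraph.ab_mem_edgeSet f.1.inf_mem,
    RGraph.ab_mem_edgeSet f.1.sup_mem, RGraph.bV_mem_edgeSet f, RGraph.tEdge_mem_edgeSet]

theorem mem_of_mem_cliqueMoves_aU {i : Fin n} (h : s(.inl i, .inr (.inr 0)) ∈ cliqueMoves G S) :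
    i ∈ S := by
  simpa [cliqueMoves, uMoves, abMoves, bvMoves, tEdge] using h

theorem mem_of_mem_cliqueMoves_ab {i : Fin n} {f : {e // e ∈ G.edgeFinset}}
    (h : s(.inl i, .inr (.inl f)) ∈ cliqueMoves G S) : f ∈ cliqueEdges G S ∧ i ∈ f.1 := by
  simp [cliqueMoves, uMoves, abMoves, bvMoves, tEdge] at h
  obtain ⟨e, he, hmem, ⟨rfl, rfl⟩ | ⟨rfl, rfl⟩⟩ := h
  exacts [⟨hmem, e.inf_mem⟩, ⟨hmem, e.sup_mem⟩]

theorem mem_of_mem_cliqueMoves_bV {f : {e // e ∈ G.edgeFinset}}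
    (h : s(.inr (.inl f), .inr (.inr 1)) ∈ cliqueMoves G S) : f ∈ cliqueEdges G S := by
  simpa [cliqueMoves, uMoves, abMoves, bvMoves, tEdge] using h

variable (j : ℕ)

theorem mem_take_cliqueMoves_aU_of_ab {i : Fin n} {f : {e // e ∈ G.edgeFinset}}
    (h : s(.inl i, .inr (.inl f)) ∈ (cliqueMoves G S).take j) :
    s(.inl i, .inr (.inr 0)) ∈ (cliqueMoves G S).take j := by
  obtain ⟨hf, hif⟩ := mem_of_mem_cliqueMoves_ab (List.mem_of_mem_take h)
  refine List.mem_take_of_mem_prefix (((List.prefix_append _ (abMoves G S)).trans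
    (List.prefix_append _ _)).trans (List.prefix_append _ _)) ?_ h ?_
  · simpa [uMoves] using mem_of_mem_cliqueEdges hf hif
  · simp [uMoves]

theorem mem_take_cliqueMoves_ab_of_bV {f : {e // e ∈ G.edgeFinset}}
    (h : s(.inr (.inl f), .inr (.inr 1)) ∈ (cliqueMoves G S).take j) :
    s(.inl f.1.inf, .inr (.inl f)) ∈ (cliqueMoves G S).take j ∧
      s(.inl f.1.sup, .inr (.inl f)) ∈ (cliqueMoves G S).take j := by
  have hf := mem_of_mem_cliqueMoves_bV (List.mem_of_mem_take h)
  have hprefix : uMoves G S ++ abMoves G S <+: cliqueMoves G S :=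
    (List.prefix_append _ (bvMoves G S)).trans (List.prefix_append _ _)
  have hbV : s(.inr (.inl f), .inr (.inr 1)) ∉ uMoves G S ++ abMoves G S := by
    simp [uMoves, abMoves]
  have hab : ∀ x ∈ [s(.inl f.1.inf, .inr (.inl f)), s(.inl f.1.sup, .inr (.inl f))],
      x ∈ uMoves G S ++ abMoves G S :=
    fun x hx => List.mem_append_right _ (List.mem_flatMap.2 ⟨f, Finset.mem_toList.2 hf, hx⟩)
  exact ⟨List.mem_take_of_mem_prefix hprefix (hab _ (by simp)) h hbV,
    List.mem_take_of_mem_prefix hprefix (hab _ (by simp)) h hbV⟩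

theorem mem_take_cliqueMoves_bV_of_t (h : tEdge G ∈ (cliqueMoves G S).take j)
    {f : {e // e ∈ G.edgeFinset}} (hf : f ∈ cliqueEdges G S) :
    s(.inr (.inl f), .inr (.inr 1)) ∈ (cliqueMoves G S).take j := by
  refine List.mem_take_of_mem_prefix (List.prefix_append _ _) ?_ h ?_
  · simp [bvMoves, hf]
  · simp [uMoves, abMoves, bvMoves, tEdge]

end CliqueMoves

section Legality

open Finset RGraph

variable {n k Δ : ℕ} {G : SimpleGraph (Fin n)} [DecidableRel G.Adj] {S : Finset (Fin n)}
  (j : ℕ)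

theorem degree_le_inflow_a (hΔ : ∀ i, G.degree i ≤ Δ) (i : Fin n) :
    G.degree i ≤ inflow (RGraph G) (wR G Δ k)
      (reverseOn ((cliqueMoves G S).take j) (CR G)) (.inl i) := by
  by_cases hU : s(.inl i, .inr (.inr 0)) ∈ (cliqueMoves G S).take j
  · exact (hΔ i).trans
      (le_inflow_of_head (w := wR G Δ k) (aU_mem_edgeSet i)
        (reverseOn_mk_of_mem_of_eq_right hU rfl))
  · let b : G.neighborFinset i → RV G := fun x =>
      .inr (.inl ⟨s(i, x), G.mem_edgeFinset.2 ((G.mem_neighborFinset i x).1 x.2)⟩)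
    calc G.degree i = ∑ x ∈ (G.neighborFinset i).attach, 1 := by
          rw [sum_const, card_attach, G.card_neighborFinset_eq_degree, smul_eq_mul, mul_one]
      _ = ∑ x ∈ (G.neighborFinset i).attach, wR G Δ k s(.inl i, b x) := rfl
      _ ≤ _ := by
        refine sum_le_inflow (fun x _ y _ h => ?_)
          (fun x _ => ab_mem_edgeSet (Sym2.mem_mk_left _ _))
          fun x _ => reverseOn_of_not_mem fun h => hU (mem_take_cliqueMoves_aU_of_ab j h)
        have hb := Sym2.congr_right.1 h
        simp only [b, Sum.inr.injEq, Sum.inl.injEq, Subtype.mk.injEq, Sym2.congr_right] at hb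
        exact Subtype.ext hb

theorem two_le_inflow_b (f : {e // e ∈ G.edgeFinset}) :
    2 ≤ inflow (RGraph G) (wR G Δ k)
      (reverseOn ((cliqueMoves G S).take j) (CR G)) (.inr (.inl f)) := by
  by_cases hV : s(.inr (.inl f), .inr (.inr 1)) ∈ (cliqueMoves G S).take j
  · obtain ⟨hinf, hsup⟩ := mem_take_cliqueMoves_ab_of_bV j hV
    have hne : f.1.inf ≠ f.1.sup :=
      Sym2.inf_ne_sup (G.not_isDiag_of_mem_edgeSet (G.mem_edgeFinset.1 f.2))
    calc 2 = ∑ x ∈ {f.1.inf, f.1.sup}, wR G Δ k s(.inl x, .inr (.inl f)) := by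
          rw [sum_pair hne]; rfl
      _ ≤ _ := by
        refine sum_le_inflow (fun x _ y _ h => by simpa using h) (fun x hx => ?_) fun x hx => ?_
        all_goals rcases mem_insert.1 hx with rfl | hx
        · exact ab_mem_edgeSet f.1.inf_mem
        · rw [mem_singleton.1 hx]; exact ab_mem_edgeSet f.1.sup_mem
        · exact reverseOn_mk_of_mem_of_eq_left hinf rfl
        · rw [mem_singleton.1 hx]; exact reverseOn_mk_of_mem_of_eq_left hsup rfl
  · exact le_inflow_of_head (w := wR G Δ k) (bV_mem_edgeSet f)
      (by rw [reverseOn_of_not_mem hV]; rfl)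

theorem le_inflow_U (hS : G.IsNClique k S) :
    (n - k) * Δ ≤ inflow (RGraph G) (wR G Δ k)
      (reverseOn ((cliqueMoves G S).take j) (CR G)) (.inr (.inr 0)) := by
  calc (n - k) * Δ = ∑ i ∈ Sᶜ, Δ := by
        rw [sum_const, card_compl, Fintype.card_fin, hS.card_eq, smul_eq_mul]
    _ = ∑ i ∈ Sᶜ, wR G Δ k s(.inl i, .inr (.inr 0)) := rfl
    _ ≤ _ := by
      refine sum_le_inflow (fun x _ y _ h => by simpa using h) (fun i _ => aU_mem_edgeSet i)
        fun i hi => reverseOn_of_not_mem fun h => ?_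
      exact mem_compl.1 hi (mem_of_mem_cliqueMoves_aU (List.mem_of_mem_take h))

theorem le_inflow_V (hS : G.IsNClique k S) :
    k * (k - 1) ≤ inflow (RGraph G) (wR G Δ k)
      (reverseOn ((cliqueMoves G S).take j) (CR G)) (.inr (.inr 1)) := by
  by_cases ht : tEdge G ∈ (cliqueMoves G S).take j
  · calc k * (k - 1) = ∑ f ∈ cliqueEdges G S, 2 := by
          rw [sum_const, smul_eq_mul, mul_comm _ 2, two_mul_card_cliqueEdges hS.isClique,
            hS.card_eq]
      _ = ∑ f ∈ cliqueEdges G S, wR G Δ k s(.inr (.inl f), .inr (.inr 1)) := rfl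
      _ ≤ _ := sum_le_inflow (fun x _ y _ h => by simpa using h) (fun f _ => bV_mem_edgeSet f)
          fun f hf => reverseOn_mk_of_mem_of_eq_left (mem_take_cliqueMoves_bV_of_t j ht hf) rfl
  · exact le_inflow_of_head (w := wR G Δ k) tEdge_mem_edgeSet
      (by rw [reverseOn_of_not_mem ht]; rfl)

theorem legal_reverseOn_take_cliqueMoves (hΔ : ∀ i, G.degree i ≤ Δ) (hS : G.IsNClique k S) :
    Legal (RGraph G) (wR G Δ k) (μR G Δ k) (reverseOn ((cliqueMoves G S).take j) (CR G)) := by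
  rintro (i | f | u)
  · exact degree_le_inflow_a j hΔ i
  · exact two_le_inflow_b j f
  · fin_cases u
    · exact le_inflow_U j hS
    · exact le_inflow_V j hS
    · exact Nat.zero_le _

end Legality

theorem stmt8_general (n Δ k : ℕ) (G : SimpleGraph (Fin n)) [DecidableRel G.Adj]
    (hΔ : ∀ i, G.degree i ≤ Δ)
    (hclique : ∃ S : Finset (Fin n), G.IsNClique k S) :
    ∃ Cs : Fin (k + 3 * (k * (k - 1)) / 2 + 1 + 1) → Sym2 (RV G) → RV G,
      ConfEq (RGraph G) (Cs 0) (CR G) ∧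
      IsReconfSeq (RGraph G) (wR G Δ k) (μR G Δ k) Cs ∧
      AtMostOnce (RGraph G) Cs ∧
      Cs (Fin.castSucc (Fin.last (k + 3 * (k * (k - 1)) / 2 + 1 - 1))) (tEdge G) ≠
        Cs (Fin.last (k + 3 * (k * (k - 1)) / 2 + 1)) (tEdge G) := by
  obtain ⟨S, hS⟩ := hclique
  have hlen := length_cliqueMoves hS
  have hm : (uMoves G S ++ abMoves G S ++ bvMoves G S).length = k + 3 * (k * (k - 1)) / 2 := by
    rw [cliqueMoves, List.length_append, List.length_singleton] at hlen
    omega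
  refine ⟨fun i => reverseOn ((cliqueMoves G S).take i) (CR G), fun e _ => by simp,
    isReconfSeq_reverseOn_take hlen RGraph.isConf_CR nodup_cliqueMoves
      (fun _ => mem_edgeSet_of_mem_cliqueMoves)
      (fun j => legal_reverseOn_take_cliqueMoves j hΔ hS),
    atMostOnce_reverseOn_take hlen nodup_cliqueMoves, ?_⟩
  simp only [Fin.val_castSucc, Fin.val_last, Nat.add_sub_cancel, ← hm]
  exact reverseOn_take_length_ne RGraph.isConf_CR nodup_cliqueMoves RGraph.tEdge_mem_edgeSet

theorem stmt8 (n Δ k : ℕ) (G : SimpleGraph (Fin n)) [DecidableRel G.Adj]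
    (hΔ : ∀ i, G.degree i ≤ Δ) (hk : 1 ≤ k)
    (hclique : ∃ S : Finset (Fin n), G.IsNClique k S) :
    ∃ Cs : Fin (k + 3 * (k * (k - 1)) / 2 + 1 + 1) → Sym2 (RV G) → RV G,
      ConfEq (RGraph G) (Cs 0) (CR G) ∧
      IsReconfSeq (RGraph G) (wR G Δ k) (μR G Δ k) Cs ∧
      AtMostOnce (RGraph G) Cs ∧
      Cs (Fin.castSucc (Fin.last (k + 3 * (k * (k - 1)) / 2 + 1 - 1))) (tEdge G) ≠
        Cs (Fin.last (k + 3 * (k * (k - 1)) / 2 + 1)) (tEdge G) :=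
  stmt8_general n Δ k G hΔ hclique
end

section
/- Let G be a finite simple graph and let G' be its triangle replacement. For every set S ⊆ V(G): S is a vertex cover of G if and only if S is a feedback vertex set of G'. -/
/-!
STATEMENT 13: Let G be a finite simple graph and let G' be its triangle
replacement. For every set S ⊆ V(G): S is a vertex cover of G if and only if
S is a feedback vertex set of G'.

The triangle replacement is built on the vertex type `V ⊕ {e // e ∈ G.edgeSet}`:
`Sum.inl u` is the original vertex `u` and `Sum.inr e` is the new vertex `x_e`
added for the edge `e`.
-/

/-- `S` is a vertex cover of `G`. -/
def IsVC {V : Type} (G : SimpleGraph V) (S : Set V) : Prop :=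
  ∀ ⦃u v : V⦄, G.Adj u v → u ∈ S ∨ v ∈ S

/-- `S` is a feedback vertex set of `H`: it meets every cycle of `H`. -/
def IsFVS {W : Type} (H : SimpleGraph W) (S : Set W) : Prop :=
  ∀ (v : W) (c : H.Walk v v), c.IsCycle → ∃ u ∈ c.support, u ∈ S

/-- The triangle replacement `G'` of `G`: for every edge `e = {u,v}` of `G`, a
new vertex `x_e` adjacent to `u` and to `v` is added (keeping all edges of
`G`). -/
def TriRep {V : Type} (G : SimpleGraph V) :
    SimpleGraph (V ⊕ {e : Sym2 V // e ∈ G.edgeSet}) where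
  Adj a b :=
    match a, b with
    | .inl u, .inl v => G.Adj u v
    | .inl u, .inr e => u ∈ (e : Sym2 V)
    | .inr e, .inl u => u ∈ (e : Sym2 V)
    | .inr _, .inr _ => False
  symm := by
    constructor
    rintro (u | e) (v | f) h
    · exact G.adj_symm h
    · exact h
    · exact h
    · exact h.elim
  loopless := by
    constructor
    rintro (u | e) h
    · exact G.irrefl h
    · exact h

/-!
Every cycle of `G'` contains both ends of some edge of `G`: a cycle leaves each of its vertices
towards two distinct neighbours, and the only neighbours of a new vertex `x_e` are the two ends
of `e`; a cycle through no new vertex runs along edges of `G`. So a vertex cover of `G` meets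
every cycle of `G'`. Conversely, each edge `uv` of `G` lies on the triangle `u v x_uv` of `G'`,
whose only original vertices are `u` and `v`.
-/

open SimpleGraph

namespace SimpleGraph.Walk

variable {W : Type*} {H : SimpleGraph W}

lemma isCycle_triangle {a b c : W} (hab : H.Adj a b) (hbc : H.Adj b c) (hca : H.Adj c a) :
    (cons hab (cons hbc (cons hca nil))).IsCycle := by
  simp [isCycle_def, hab.ne, hbc.ne, hca.ne, hab.ne.symm, hca.ne.symm]

lemma IsCycle.exists_adj_adj_of_mem_support {v x : W} {c : H.Walk v v} (hc : c.IsCycle)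
    (hx : x ∈ c.support) :
    ∃ y ∈ c.support, ∃ z ∈ c.support, y ≠ z ∧ H.Adj x y ∧ H.Adj x z := by
  classical
  have hc' := hc.rotate hx
  exact ⟨_, (mem_support_rotate_iff ..).mp (getVert_mem_support ..),
    _, (mem_support_rotate_iff ..).mp (getVert_mem_support ..), hc'.snd_ne_penultimate,
    adj_snd hc'.not_nil, (adj_penultimate hc'.not_nil).symm⟩

end SimpleGraph.Walk

section TriRep

variable {V : Type} {G : SimpleGraph V}

lemma adj_of_triRep_adj_inr {e : {e : Sym2 V // e ∈ G.edgeSet}} {a b : V}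
    (ha : (TriRep G).Adj (.inr e) (.inl a)) (hb : (TriRep G).Adj (.inr e) (.inl b))
    (hab : a ≠ b) : G.Adj a b := by
  have he : (e : Sym2 V) = s(a, b) := (Sym2.mem_and_mem_iff hab).mp ⟨ha, hb⟩
  simpa [he] using e.2

lemma exists_adj_of_isCycle_triRep {v} {c : (TriRep G).Walk v v} (hc : c.IsCycle) :
    ∃ a b, G.Adj a b ∧ .inl a ∈ c.support ∧ .inl b ∈ c.support := by
  have of_mem_inr (e) (he : .inr e ∈ c.support) :
      ∃ a b, G.Adj a b ∧ .inl a ∈ c.support ∧ .inl b ∈ c.support := by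
    obtain ⟨y, hy, z, hz, hyz, hey, hez⟩ := hc.exists_adj_adj_of_mem_support he
    rcases y with a | _ <;> rcases z with b | _
    · exact ⟨a, b, adj_of_triRep_adj_inr hey hez (by simpa using hyz), hy, hz⟩
    all_goals first | exact hey.elim | exact hez.elim
  rcases v with u | e
  · obtain ⟨y, hy, -, -, -, huy, -⟩ := hc.exists_adj_adj_of_mem_support c.start_mem_support
    rcases y with w | e
    · exact ⟨u, w, huy, c.start_mem_support, hy⟩
    · exact of_mem_inr e hy
  · exact of_mem_inr e c.start_mem_support

theorem isFVS_triRep_of_isVC {S : Set V} (hS : IsVC G S) : IsFVS (TriRep G) (Sum.inl '' S) := by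
  intro _ c hc
  obtain ⟨a, b, hab, ha, hb⟩ := exists_adj_of_isCycle_triRep hc
  rcases hS hab with hs | hs
  exacts [⟨_, ha, a, hs, rfl⟩, ⟨_, hb, b, hs, rfl⟩]

theorem isVC_of_isFVS_triRep {S : Set V} (hS : IsFVS (TriRep G) (Sum.inl '' S)) : IsVC G S := by
  intro u v huv
  have huv' : (TriRep G).Adj (.inl u) (.inl v) := huv
  have hvx : (TriRep G).Adj (.inl v) (.inr ⟨s(u, v), huv⟩) := Sym2.mem_mk_right u v
  have hxu : (TriRep G).Adj (.inr ⟨s(u, v), huv⟩) (.inl u) := Sym2.mem_mk_left u v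
  obtain ⟨x, hx, s, hs, rfl⟩ := hS _ _ (Walk.isCycle_triangle huv' hvx hxu)
  simp only [Walk.support_cons, Walk.support_nil, List.mem_cons, Sum.inl.injEq,
    reduceCtorEq, List.not_mem_nil, false_or, or_false] at hx
  rcases hx with rfl | rfl | rfl
  exacts [.inl hs, .inr hs, .inl hs]

end TriRep

theorem stmt13_general {V : Type} (G : SimpleGraph V)
    (S : Set V) :
    IsVC G S ↔ IsFVS (TriRep G) (Sum.inl '' S) :=
  ⟨isFVS_triRep_of_isVC, isVC_of_isFVS_triRep⟩

theorem stmt13 {V : Type} [Fintype V] [DecidableEq V] (G : SimpleGraph V)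
    (S : Set V) :
    IsVC G S ↔ IsFVS (TriRep G) (Sum.inl '' S) :=
  stmt13_general G S
end

section
/- Let G be a finite simple graph with n vertices, maximum degree at most 3, and cutwidth at most c. Then there exist an injective map φ from V(G) to the vertices of the (c+1) × 3n grid graph and, for each edge {u,v} of G, a path P_{uv} in the grid graph from φ(u) to φ(v), such that the paths are pairwise edge-disjoint and no internal vertex of any of the paths belongs to the image of φ. -/
/-!
Place the vertices on row `0` in the order of an arrangement of cutwidth at most `c`, each in the
middle of its own block of three columns. The route of an edge `uv`, with `u` before `v`, leaves
each endpoint's block in the column given by the rank of the other endpoint among its neighbours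
(three columns suffice as the degree is at most 3, and no two routes share a column), climbs to
row `k + 1`, runs horizontally and comes back down. The track `k < c` is a greedy colouring of the
intervals `[pos u, pos v)`, at most `c` of which contain any point; routes on the same track have
disjoint intervals and hence disjoint horizontal runs.
-/

/-- The `a × b` grid graph: vertices are pairs, adjacent iff they differ by
exactly 1 in exactly one coordinate. -/
def GridGraph (a b : ℕ) : SimpleGraph (Fin a × Fin b) where
  Adj p q :=
    (p.1 = q.1 ∧ ((p.2 : ℕ) + 1 = q.2 ∨ (q.2 : ℕ) + 1 = p.2)) ∨
    (p.2 = q.2 ∧ ((p.1 : ℕ) + 1 = q.1 ∨ (q.1 : ℕ) + 1 = p.1))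
  symm := by
    constructor
    rintro p q (⟨h, h'⟩ | ⟨h, h'⟩)
    · exact Or.inl ⟨h.symm, h'.symm⟩
    · exact Or.inr ⟨h.symm, h'.symm⟩
  loopless := by constructor; rintro p (⟨-, h | h⟩ | ⟨-, h | h⟩) <;> omega

/-- `G` has cutwidth at most `c`: for some linear arrangement of the vertices,
at most `c` edges cross each gap. -/
def CutwidthAtMost {V : Type} [Fintype V] (G : SimpleGraph V) (c : ℕ) : Prop :=
  ∃ f : V ≃ Fin (Fintype.card V), ∀ i : ℕ,
    {e ∈ G.edgeSet | ∃ u v : V, e = s(u, v) ∧ (f u : ℕ) ≤ i ∧ i < (f v : ℕ)}.ncard ≤ c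

open Finset

namespace SimpleGraph

variable {W : Type*} {H : SimpleGraph W}

noncomputable def walkOfAdjOrEq {u v : W} (h : H.Adj u v ∨ u = v) : H.Walk u v :=
  open Classical in
  if hadj : H.Adj u v then hadj.toWalk else Walk.nil.copy rfl (h.resolve_left hadj)

theorem edges_walkOfAdjOrEq_subset {u v : W} (h : H.Adj u v ∨ u = v) :
    (walkOfAdjOrEq h).edges ⊆ [s(u, v)] := by
  unfold walkOfAdjOrEq
  split_ifs <;> simp

theorem support_walkOfAdjOrEq_subset {u v : W} (h : H.Adj u v ∨ u = v) :
    (walkOfAdjOrEq h).support ⊆ [u, v] := by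
  unfold walkOfAdjOrEq
  split_ifs <;> simp

variable (g : ℕ → W) (hg : ∀ i, H.Adj (g i) (g (i + 1)) ∨ g i = g (i + 1))

noncomputable def chainWalk (x : ℕ) : (k : ℕ) → H.Walk (g x) (g (x + k))
  | 0 => Walk.nil
  | k + 1 => (chainWalk x k).append (walkOfAdjOrEq (hg (x + k)))

theorem mem_edges_chainWalk {x k : ℕ} {e : Sym2 W} (he : e ∈ (chainWalk g hg x k).edges) :
    ∃ i, x ≤ i ∧ i < x + k ∧ e = s(g i, g (i + 1)) := by
  induction k with
  | zero => simp [chainWalk] at he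
  | succ k ih =>
    rw [chainWalk, Walk.edges_append, List.mem_append] at he
    rcases he with he | he
    · obtain ⟨i, hxi, hik, rfl⟩ := ih he
      exact ⟨i, hxi, by omega, rfl⟩
    · exact ⟨x + k, by omega, by omega, List.mem_singleton.1 (edges_walkOfAdjOrEq_subset _ he)⟩

theorem mem_support_chainWalk {x k : ℕ} {w : W} (hw : w ∈ (chainWalk g hg x k).support) :
    ∃ i, x ≤ i ∧ i ≤ x + k ∧ w = g i := by
  induction k with
  | zero => exact ⟨x, le_rfl, by omega, by simpa [chainWalk] using hw⟩
  | succ k ih =>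
    rw [chainWalk, Walk.mem_support_append_iff] at hw
    rcases hw with hw | hw
    · obtain ⟨i, hxi, hik, rfl⟩ := ih hw
      exact ⟨i, hxi, by omega, rfl⟩
    · rcases List.mem_pair.1 (support_walkOfAdjOrEq_subset _ hw) with rfl | rfl
      exacts [⟨x + k, by omega, by omega, rfl⟩, ⟨x + k + 1, by omega, by omega, rfl⟩]

noncomputable def segWalk (x y : ℕ) : H.Walk (g x) (g y) :=
  if h : x ≤ y then (chainWalk g hg x (y - x)).copy rfl (by rw [Nat.add_sub_cancel' h])
  else ((chainWalk g hg y (x - y)).copy rfl (by rw [Nat.add_sub_cancel' (by omega)])).reverse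

theorem mem_edges_segWalk {x y : ℕ} {e : Sym2 W} (he : e ∈ (segWalk g hg x y).edges) :
    ∃ i, min x y ≤ i ∧ i < max x y ∧ e = s(g i, g (i + 1)) := by
  unfold segWalk at he
  split_ifs at he <;>
  · obtain ⟨i, h₁, h₂, rfl⟩ := mem_edges_chainWalk g hg (by simpa using he)
    exact ⟨i, by omega, by omega, rfl⟩

theorem mem_support_segWalk {x y : ℕ} {w : W} (hw : w ∈ (segWalk g hg x y).support) :
    ∃ i, min x y ≤ i ∧ i ≤ max x y ∧ w = g i := by
  unfold segWalk at hw
  split_ifs at hw <;>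
  · obtain ⟨i, h₁, h₂, rfl⟩ := mem_support_chainWalk g hg (by simpa using hw)
    exact ⟨i, by omega, by omega, rfl⟩

end SimpleGraph

namespace GridGraph

open SimpleGraph

variable {a b : ℕ} [NeZero a] [NeZero b]

/-- Clamping makes `pt` total: consecutive points along a row or a column are then adjacent or
equal, so the walks below need no bound hypotheses. -/
def pt (r x : ℕ) : Fin a × Fin b :=
  (⟨min r (a - 1), by have := NeZero.pos a; omega⟩,
    ⟨min x (b - 1), by have := NeZero.pos b; omega⟩)

@[simp] theorem pt_fst_val (r x : ℕ) : ((pt r x : Fin a × Fin b).1 : ℕ) = min r (a - 1) := rfl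

@[simp] theorem pt_snd_val (r x : ℕ) : ((pt r x : Fin a × Fin b).2 : ℕ) = min x (b - 1) := rfl

theorem adj_or_eq_pt_right (r x : ℕ) :
    (GridGraph a b).Adj (pt r x) (pt r (x + 1)) ∨ (pt r x : Fin a × Fin b) = pt r (x + 1) := by
  have := NeZero.pos b
  simp only [GridGraph, Prod.ext_iff, Fin.ext_iff, pt_fst_val, pt_snd_val, true_and]
  omega

theorem adj_or_eq_pt_up (r x : ℕ) :
    (GridGraph a b).Adj (pt r x) (pt (r + 1) x) ∨ (pt r x : Fin a × Fin b) = pt (r + 1) x := by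
  have := NeZero.pos a
  simp only [GridGraph, Prod.ext_iff, Fin.ext_iff, pt_fst_val, pt_snd_val, true_and, and_true]
  omega

noncomputable def rowWalk (r x y : ℕ) : (GridGraph a b).Walk (pt r x) (pt r y) :=
  segWalk (fun z => pt r z) (adj_or_eq_pt_right r) x y

noncomputable def colWalk (x r s : ℕ) : (GridGraph a b).Walk (pt r x) (pt s x) :=
  segWalk (fun i => pt i x) (fun i => adj_or_eq_pt_up i x) r s

noncomputable def staple (x px py y r : ℕ) : (GridGraph a b).Walk (pt 0 x) (pt 0 y) :=
  (rowWalk 0 x px).append <| (colWalk px 0 r).append <| (rowWalk r px py).append <|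
    (colWalk py r 0).append (rowWalk 0 py y)

variable {x px py y r : ℕ}

theorem mem_edges_staple (hx : x < b) (hpx : px < b) (hpy : py < b) (hy : y < b) (hr : r < a)
    {e : Sym2 (Fin a × Fin b)} (he : e ∈ (staple x px py y r).edges) :
    ∃ p q : Fin a × Fin b, e = s(p, q) ∧
      ((p.1 : ℕ) = 0 ∧ (q.1 : ℕ) = 0 ∧ (q.2 : ℕ) = p.2 + 1 ∧
          (min x px ≤ p.2 ∧ (p.2 : ℕ) < max x px ∨ min py y ≤ p.2 ∧ (p.2 : ℕ) < max py y) ∨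
        (p.1 : ℕ) = r ∧ (q.1 : ℕ) = r ∧ (q.2 : ℕ) = p.2 + 1 ∧
          min px py ≤ p.2 ∧ (p.2 : ℕ) < max px py ∨
        ((p.2 : ℕ) = px ∨ (p.2 : ℕ) = py) ∧ (q.2 : ℕ) = p.2 ∧ (q.1 : ℕ) = p.1 + 1 ∧
          (p.1 : ℕ) < r) := by
  simp only [staple, Walk.edges_append, List.mem_append] at he
  rcases he with he | he | he | he | he <;>
  · obtain ⟨i, h₁, h₂, rfl⟩ := mem_edges_segWalk _ _ he
    refine ⟨_, _, rfl, ?_⟩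
    have := NeZero.pos a
    simp only [pt_fst_val, pt_snd_val, true_and]
    omega

theorem mem_support_staple (hx : x < b) (hpx : px < b) (hpy : py < b) (hy : y < b) (hr : r < a)
    {w : Fin a × Fin b} (hw : w ∈ (staple x px py y r).support) :
    (w.1 : ℕ) = 0 ∧
        (min x px ≤ w.2 ∧ (w.2 : ℕ) ≤ max x px ∨ min py y ≤ w.2 ∧ (w.2 : ℕ) ≤ max py y) ∨
      (w.1 : ℕ) = r ∧ min px py ≤ w.2 ∧ (w.2 : ℕ) ≤ max px py ∨
      ((w.2 : ℕ) = px ∨ (w.2 : ℕ) = py) ∧ (w.1 : ℕ) ≤ r := by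
  simp only [staple, Walk.mem_support_append_iff] at hw
  rcases hw with hw | hw | hw | hw | hw <;>
  · obtain ⟨i, h₁, h₂, rfl⟩ := mem_support_segWalk _ _ hw
    have := NeZero.pos a
    simp only [pt_fst_val, pt_snd_val]
    omega

end GridGraph

/-- Greedy colouring by increasing left endpoint works because every interval meeting the one
with the largest left endpoint contains that endpoint. -/
theorem Finset.exists_coloring_of_intervals {ι : Type*} [DecidableEq ι] (S : Finset ι)
    (lo hi : ι → ℕ) (c : ℕ) (hlt : ∀ i ∈ S, lo i < hi i)
    (hcov : ∀ t, #{i ∈ S | lo i ≤ t ∧ t < hi i} ≤ c) :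
    ∃ col : ι → ℕ, (∀ i ∈ S, col i < c) ∧
      ∀ i ∈ S, ∀ j ∈ S, i ≠ j → lo i < hi j → lo j < hi i → col i ≠ col j := by
  induction S using Finset.induction_on_max_value lo with
  | empty => exact ⟨fun _ => 0, by simp, by simp⟩
  | insert i S hiS hmax ih =>
    obtain ⟨col, hcol, hne⟩ := ih (fun j hj => hlt j (mem_insert_of_mem hj)) fun t =>
      (card_le_card (filter_subset_filter _ (subset_insert i S))).trans (hcov t)
    have hblocked : #{j ∈ S | lo i < hi j} < c := by
      have hsub : insert i {j ∈ S | lo i < hi j} ⊆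
          {j ∈ insert i S | lo j ≤ lo i ∧ lo i < hi j} := by
        intro j hj
        rcases mem_insert.1 hj with rfl | hjB
        · simpa using hlt j (mem_insert_self j S)
        · obtain ⟨hjS, hj⟩ := mem_filter.1 hjB
          exact mem_filter.2 ⟨mem_insert_of_mem hjS, hmax j hjS, hj⟩
      have := (card_le_card hsub).trans (hcov (lo i))
      rw [card_insert_of_notMem fun h => hiS (mem_filter.1 h).1] at this
      omega
    obtain ⟨k, hk, hkB⟩ := exists_mem_notMem_of_card_lt_card
      ((card_image_le (f := col)).trans_lt (hblocked.trans_eq (card_range c).symm))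
    have hupd : ∀ j ∈ S, Function.update col i k j = col j := fun j hj =>
      Function.update_of_ne (by rintro rfl; exact hiS hj) _ _
    refine ⟨Function.update col i k, fun j hj => ?_, fun j hj j' hj' hjj' h₁ h₂ => ?_⟩
    · rcases mem_insert.1 hj with rfl | hjS
      · simpa using hk
      · exact (hupd j hjS).trans_lt (hcol j hjS)
    · rcases mem_insert.1 hj with rfl | hjS <;> rcases mem_insert.1 hj' with rfl | hjS'
      · exact absurd rfl hjj'
      · rw [Function.update_self, hupd j' hjS']
        exact fun h => hkB (mem_image.2 ⟨j', mem_filter.2 ⟨hjS', h₁⟩, h.symm⟩)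
      · rw [Function.update_self, hupd j hjS]
        exact fun h => hkB (mem_image.2 ⟨j, mem_filter.2 ⟨hjS, h₂⟩, h⟩)
      · rw [hupd j hjS, hupd j' hjS']
        exact hne j hjS j' hjS' hjj' h₁ h₂

namespace SimpleGraph

open GridGraph

variable {V : Type*} [Fintype V] (G : SimpleGraph V) [DecidableRel G.Adj] (pos : V → ℕ)

def orientedEdges : Finset (V × V) := {p | G.Adj p.1 p.2 ∧ pos p.1 < pos p.2}

def neighborRank (w u : V) : ℕ := #{u' ∈ G.neighborFinset w | pos u' < pos u}

/-- Vertex `w` owns the columns `3 * pos w + k`, `k < 3`; the route of the edge `wu` leaves row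
`0` in the column given by the rank of `u` among the neighbours of `w`. -/
def portCol (w u : V) : ℕ := 3 * pos w + G.neighborRank pos w u

section Ports

variable {G pos}

theorem mem_orientedEdges {p : V × V} :
    p ∈ G.orientedEdges pos ↔ G.Adj p.1 p.2 ∧ pos p.1 < pos p.2 := by
  simp [orientedEdges]

theorem card_orientedEdges_crossing_le (t : ℕ) :
    #{p ∈ G.orientedEdges pos | pos p.1 ≤ t ∧ t < pos p.2} ≤
      {e ∈ G.edgeSet | ∃ u v, e = s(u, v) ∧ pos u ≤ t ∧ t < pos v}.ncard := by
  rw [← Set.ncard_coe_finset]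
  refine Set.ncard_le_ncard_of_injOn (fun p => s(p.1, p.2)) ?_ ?_
  · rintro ⟨u, v⟩ hp
    simp only [coe_filter, mem_orientedEdges, Set.mem_ofPred_eq] at hp
    exact ⟨hp.1.1, u, v, rfl, hp.2⟩
  · rintro ⟨u, v⟩ hp ⟨u', v'⟩ hq h
    simp only [coe_filter, mem_orientedEdges, Set.mem_ofPred_eq] at hp hq
    rcases Sym2.eq_iff.1 h with ⟨rfl, rfl⟩ | ⟨rfl, rfl⟩
    · rfl
    · exact (lt_asymm hp.1.2 hq.1.2).elim

theorem neighborRank_lt_degree {w u : V} (h : G.Adj w u) :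
    G.neighborRank pos w u < G.degree w := by
  rw [← card_neighborFinset_eq_degree]
  exact card_lt_card (filter_ssubset.2 ⟨u, (mem_neighborFinset G w u).2 h, lt_irrefl _⟩)

theorem neighborRank_lt_neighborRank {w u u' : V} (h : G.Adj w u) (hlt : pos u < pos u') :
    G.neighborRank pos w u < G.neighborRank pos w u' := by
  refine card_lt_card ((ssubset_iff_of_subset fun x hx => ?_).2 ⟨u, ?_, ?_⟩)
  · rw [mem_filter] at hx ⊢
    exact ⟨hx.1, hx.2.trans hlt⟩
  · exact mem_filter.2 ⟨(mem_neighborFinset G w u).2 h, hlt⟩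
  · simp

theorem eq_of_neighborRank_eq (hpos : Function.Injective pos) {w u u' : V} (h : G.Adj w u)
    (h' : G.Adj w u') (heq : G.neighborRank pos w u = G.neighborRank pos w u') : u = u' := by
  rcases lt_trichotomy (pos u) (pos u') with hlt | heq' | hlt
  · exact absurd heq (neighborRank_lt_neighborRank h hlt).ne
  · exact hpos heq'
  · exact absurd heq (neighborRank_lt_neighborRank h' hlt).ne'

variable (hdeg : ∀ v, G.degree v ≤ 3)
include hdeg

variable (pos) in
theorem portCol_div_three {w u : V} (h : G.Adj w u) : G.portCol pos w u / 3 = pos w := by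
  have := neighborRank_lt_degree (pos := pos) h
  have := hdeg w
  unfold portCol
  omega

variable (hpos : Function.Injective pos)
include hpos

theorem eq_of_portCol_eq {w u w' u' : V} (h : G.Adj w u) (h' : G.Adj w' u')
    (heq : G.portCol pos w u = G.portCol pos w' u') : w = w' ∧ u = u' := by
  have hw := portCol_div_three pos hdeg h
  have hw' := portCol_div_three pos hdeg h'
  obtain rfl : w = w' := hpos (by rw [← hw, ← hw', heq])
  exact ⟨rfl, eq_of_neighborRank_eq hpos h h' (by unfold portCol at heq; omega)⟩

/-- At a vertex shared by two consecutive edges, the incoming edge uses a column to the left of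
the outgoing one. -/
theorem portCol_lt_portCol {u v u' v' : V} (hvu : G.Adj v u) (hu'v' : G.Adj u' v')
    (hlt₁ : pos u < pos v) (hle : pos v ≤ pos u') (hlt₂ : pos u' < pos v') :
    G.portCol pos v u < G.portCol pos u' v' := by
  rcases hle.lt_or_eq with hlt | heq
  · have := portCol_div_three pos hdeg hvu
    have := portCol_div_three pos hdeg hu'v'
    omega
  · obtain rfl := hpos heq
    have := neighborRank_lt_neighborRank (pos := pos) hvu (hlt₁.trans hlt₂)
    unfold portCol
    omega

end Ports

section Routes

variable {a b : ℕ} [NeZero a] [NeZero b] (col : V × V → ℕ)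

/-- The shift by one keeps row `0` free for the vertices. -/
noncomputable def route (u v : V) :
    (GridGraph a b).Walk (pt 0 (3 * pos u + 1)) (pt 0 (3 * pos v + 1)) :=
  staple (3 * pos u + 1) (G.portCol pos u v) (G.portCol pos v u) (3 * pos v + 1) (col (u, v) + 1)

noncomputable def edgeRoute (u v : V) :
    (GridGraph a b).Walk (pt 0 (3 * pos u + 1)) (pt 0 (3 * pos v + 1)) :=
  if pos u < pos v then G.route pos col u v else (G.route pos col v u).reverse

variable {G pos col}

theorem exists_route_of_adj (hpos : Function.Injective pos) {u v : V} (h : G.Adj u v) :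
    ∃ u' v', (u', v') ∈ G.orientedEdges pos ∧ s(u', v') = s(u, v) ∧
      (G.edgeRoute pos col u v : (GridGraph a b).Walk _ _).edges ⊆ (G.route pos col u' v').edges ∧
      (G.edgeRoute pos col u v : (GridGraph a b).Walk _ _).support ⊆
        (G.route pos col u' v').support := by
  unfold edgeRoute
  split_ifs with hlt
  · exact ⟨u, v, mem_orientedEdges.2 ⟨h, hlt⟩, rfl, List.Subset.refl _, List.Subset.refl _⟩
  · have hlt' : pos v < pos u := (Ne.symm fun he => h.ne (hpos he)).lt_of_le (not_lt.1 hlt)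
    refine ⟨v, u, mem_orientedEdges.2 ⟨h.symm, hlt'⟩, Sym2.eq_swap, ?_, ?_⟩
    · simp [Walk.edges_reverse]
    · simp [Walk.support_reverse]

variable (hpos : Function.Injective pos) (hdeg : ∀ v, G.degree v ≤ 3)
  (hb : ∀ v, 3 * pos v + 3 ≤ b) (hcol : ∀ p ∈ G.orientedEdges pos, col p + 1 < a)
include hpos hdeg hb hcol

theorem eq_or_eq_of_mem_support_route {u v : V} (hp : (u, v) ∈ G.orientedEdges pos) {w : V}
    (hw : pt 0 (3 * pos w + 1) ∈ (G.route pos col u v : (GridGraph a b).Walk _ _).support) :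
    w = u ∨ w = v := by
  obtain ⟨huv, -⟩ : G.Adj u v ∧ pos u < pos v := mem_orientedEdges.1 hp
  have := portCol_div_three pos hdeg huv
  have := portCol_div_three pos hdeg huv.symm
  have := hb u
  have := hb v
  have := hb w
  have := hcol _ hp
  have := NeZero.pos a
  have hw := mem_support_staple (by omega) (by omega) (by omega) (by omega) (by omega) hw
  simp only [pt_fst_val, pt_snd_val] at hw
  rcases (by omega : pos w = pos u ∨ pos w = pos v) with h | h
  exacts [.inl (hpos h), .inr (hpos h)]

theorem eq_or_eq_of_mem_support_edgeRoute {u v w : V} (h : G.Adj u v)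
    (hw : pt 0 (3 * pos w + 1) ∈ (G.edgeRoute pos col u v : (GridGraph a b).Walk _ _).support) :
    w = u ∨ w = v := by
  obtain ⟨x, y, hxy, hs, -, hsub⟩ := exists_route_of_adj (a := a) (b := b) (col := col) hpos h
  have := eq_or_eq_of_mem_support_route hpos hdeg hb hcol hxy (hsub hw)
  rcases Sym2.eq_iff.1 hs with ⟨rfl, rfl⟩ | ⟨rfl, rfl⟩ <;> tauto

variable (hcol_ne : ∀ p ∈ G.orientedEdges pos, ∀ q ∈ G.orientedEdges pos, p ≠ q →
  pos p.1 < pos q.2 → pos q.1 < pos p.2 → col p ≠ col q)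
include hcol_ne

theorem route_edges_disjoint {u v u' v' : V} (hp : (u, v) ∈ G.orientedEdges pos)
    (hq : (u', v') ∈ G.orientedEdges pos) (hpq : (u, v) ≠ (u', v')) {e : Sym2 (Fin a × Fin b)}
    (he : e ∈ (G.route pos col u v).edges) : e ∉ (G.route pos col u' v').edges := by
  intro he'
  obtain ⟨huv, hlt⟩ : G.Adj u v ∧ pos u < pos v := mem_orientedEdges.1 hp
  obtain ⟨huv', hlt'⟩ : G.Adj u' v' ∧ pos u' < pos v' := mem_orientedEdges.1 hq
  have hports : G.portCol pos u v ≠ G.portCol pos u' v' ∧ G.portCol pos u v ≠ G.portCol pos v' u' ∧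
      G.portCol pos v u ≠ G.portCol pos u' v' ∧ G.portCol pos v u ≠ G.portCol pos v' u' := by
    refine ⟨fun h => ?_, fun h => ?_, fun h => ?_, fun h => ?_⟩
    · obtain ⟨rfl, rfl⟩ := eq_of_portCol_eq hdeg hpos huv huv' h
      exact hpq rfl
    · obtain ⟨rfl, rfl⟩ := eq_of_portCol_eq hdeg hpos huv huv'.symm h
      exact lt_asymm hlt hlt'
    · obtain ⟨rfl, rfl⟩ := eq_of_portCol_eq hdeg hpos huv.symm huv' h
      exact lt_asymm hlt hlt'
    · obtain ⟨rfl, rfl⟩ := eq_of_portCol_eq hdeg hpos huv.symm huv'.symm h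
      exact hpq rfl
  have htrack : col (u, v) = col (u', v') →
      G.portCol pos v u < G.portCol pos u' v' ∨ G.portCol pos v' u' < G.portCol pos u v := by
    intro h
    by_cases hleft : pos v ≤ pos u'
    · exact .inl (portCol_lt_portCol hdeg hpos huv.symm huv' hlt hleft hlt')
    · refine .inr (portCol_lt_portCol hdeg hpos huv'.symm huv hlt' ?_ hlt)
      by_contra hright
      exact hcol_ne _ hp _ hq hpq (show pos u < pos v' by omega) (show pos u' < pos v by omega) h
  have := portCol_div_three pos hdeg huv
  have := portCol_div_three pos hdeg huv.symm
  have := portCol_div_three pos hdeg huv'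
  have := portCol_div_three pos hdeg huv'.symm
  have := hb u; have := hb v; have := hb u'; have := hb v'
  have := hcol _ hp; have := hcol _ hq
  obtain ⟨p₁, q₁, rfl, hs⟩ :=
    mem_edges_staple (by omega) (by omega) (by omega) (by omega) (by omega) he
  obtain ⟨p₂, q₂, heq, hs'⟩ :=
    mem_edges_staple (by omega) (by omega) (by omega) (by omega) (by omega) he'
  -- An edge on row `0` or in a column determines the port it serves; an edge on a track lies
  -- between the two ports of its route.
  rcases Sym2.eq_iff.1 heq with ⟨rfl, rfl⟩ | ⟨rfl, rfl⟩ <;> omega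

theorem edgeRoute_edges_disjoint {u v u' v' : V} (h : G.Adj u v) (h' : G.Adj u' v')
    (hne : s(u, v) ≠ s(u', v')) {e : Sym2 (Fin a × Fin b)}
    (he : e ∈ (G.edgeRoute pos col u v).edges) : e ∉ (G.edgeRoute pos col u' v').edges := by
  obtain ⟨x, y, hxy, hs, hsub, -⟩ := exists_route_of_adj (a := a) (b := b) (col := col) hpos h
  obtain ⟨x', y', hxy', hs', hsub', -⟩ := exists_route_of_adj (a := a) (b := b) (col := col) hpos h'
  refine fun he' => route_edges_disjoint hpos hdeg hb hcol hcol_ne hxy hxy' ?_ (hsub he) (hsub' he')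
  rintro ⟨⟩
  exact hne (hs.symm.trans hs')

end Routes

end SimpleGraph

open SimpleGraph GridGraph

theorem stmt16_general {V : Type} [Fintype V] (G : SimpleGraph V)
    [DecidableRel G.Adj] (c : ℕ)
    (hdeg : ∀ v, G.degree v ≤ 3) (hcw : CutwidthAtMost G c) :
    ∃ (φ : V → Fin (c + 1) × Fin (3 * Fintype.card V))
      (P : ∀ u v : V, G.Adj u v →
        (GridGraph (c + 1) (3 * Fintype.card V)).Walk (φ u) (φ v)),
      Function.Injective φ ∧
      (∀ u v (h : G.Adj u v), (P u v h).IsPath) ∧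
      (∀ u v (h : G.Adj u v) u' v' (h' : G.Adj u' v'),
        s(u, v) ≠ s(u', v') →
        ∀ e ∈ (P u v h).edges, e ∉ (P u' v' h').edges) ∧
      (∀ u v (h : G.Adj u v), ∀ x ∈ (P u v h).support,
        x ≠ φ u → x ≠ φ v → x ∉ Set.range φ) := by
  classical
  obtain ⟨f, hf⟩ := hcw
  cases isEmpty_or_nonempty V
  · exact ⟨isEmptyElim, fun u => isEmptyElim u, fun u => isEmptyElim u, fun u => isEmptyElim u,
      fun u => isEmptyElim u, fun u => isEmptyElim u⟩
  have : NeZero (Fintype.card V) := ⟨Fintype.card_ne_zero⟩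
  set pos : V → ℕ := fun v => f v
  have hpos : Function.Injective pos := fun u v h => f.injective (Fin.ext h)
  have hb (v : V) : 3 * pos v + 3 ≤ 3 * Fintype.card V := by
    have : pos v < Fintype.card V := (f v).isLt
    omega
  obtain ⟨col, hcol, hcol_ne⟩ := (G.orientedEdges pos).exists_coloring_of_intervals
    (fun p => pos p.1) (fun p => pos p.2) c (fun p hp => (mem_orientedEdges.1 hp).2)
    fun t => (card_orientedEdges_crossing_le t).trans (hf t)
  have hrow (p) (hp : p ∈ G.orientedEdges pos) : col p + 1 < c + 1 :=
    Nat.add_lt_add_right (hcol p hp) 1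
  refine ⟨fun v => pt 0 (3 * pos v + 1), fun u v _ => (G.edgeRoute pos col u v).bypass,
    fun u v h => ?_, fun u v _ => Walk.bypass_isPath _,
    fun u v h u' v' h' hne e he he' => ?_, ?_⟩
  · simp only [Prod.ext_iff, Fin.ext_iff, pt_snd_val] at h
    exact hpos (by have := hb u; have := hb v; omega)
  · exact edgeRoute_edges_disjoint hpos hdeg hb hrow hcol_ne h h' hne
      (Walk.edges_bypass_subset_edges _ he) (Walk.edges_bypass_subset_edges _ he')
  · rintro u v h _ hx hxu hxv ⟨w, rfl⟩
    rcases eq_or_eq_of_mem_support_edgeRoute hpos hdeg hb hrow h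
      (Walk.support_bypass_subset_support _ hx) with rfl | rfl
    exacts [hxu rfl, hxv rfl]

theorem stmt16 {V : Type} [Fintype V] [DecidableEq V] (G : SimpleGraph V)
    [DecidableRel G.Adj] (c : ℕ)
    (hdeg : ∀ v, G.degree v ≤ 3) (hcw : CutwidthAtMost G c) :
    ∃ (φ : V → Fin (c + 1) × Fin (3 * Fintype.card V))
      (P : ∀ u v : V, G.Adj u v →
        (GridGraph (c + 1) (3 * Fintype.card V)).Walk (φ u) (φ v)),
      Function.Injective φ ∧
      (∀ u v (h : G.Adj u v), (P u v h).IsPath) ∧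
      (∀ u v (h : G.Adj u v) u' v' (h' : G.Adj u' v'),
        s(u, v) ≠ s(u', v') →
        ∀ e ∈ (P u v h).edges, e ∉ (P u' v' h').edges) ∧
      (∀ u v (h : G.Adj u v), ∀ x ∈ (P u v h).support,
        x ≠ φ u → x ≠ φ v → x ∉ Set.range φ) :=
  stmt16_general G c hdeg hcw
end
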